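/- Let n ≥ 2, c > 0, f as above (continuous, nondecreasing in x, |f(t,0)| ≤ c), and suppose x^n minimizes I on E with I(x^n) ≤ I(0) = 0, where I(x) = Σ_{k=1}^n (1/2)|Δx(k−1)|² + (1/n²)Σ_{k=1}^{n−1} F(k/n,x(k)). Then ‖x^n‖ ≤ 2c√(n−1)/n, and consequently |x^n(k)| ≤ c for all k ∈ {0,...,n}. -/

import Mathlib

/-!
Write `S = ∑ (Δx(k-1))²`. Cauchy–Schwarz along the telescoping sums from `0` and from `n` gives
`x(k)² ≤ k S₁` and `x(k)² ≤ (n-k) S₂` with `S₁ + S₂ = S`, hence the embedding `4 x(k)² ≤ n S`.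
Monotonicity of `f t` gives `∫₀^y f t ≥ f t 0 · y ≥ -c |y|`, so with the embedding and
`(n-1) √n ≤ n √(n-1)` the action satisfies `I x ≥ S/2 - c (√(n-1)/n) √S`.
As `I xₙ ≤ I 0 = 0`, this forces `√S ≤ 2c √(n-1)/n`, and the embedding together with
`√n √(n-1) ≤ n` turns that into `|xₙ(k)| ≤ c`.
-/

open Finset Set intervalIntegral

section

variable {R : Type*} [CommRing R] [LinearOrder R] [IsStrictOrderedRing R]

theorem Finset.sum_Ioc_sub_pred {M : Type*} [AddCommGroup M] (x : ℕ → M) {a b : ℕ}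
    (hab : a ≤ b) : ∑ j ∈ Ioc a b, (x j - x (j - 1)) = x b - x a := by
  induction b, hab using Nat.le_induction with
  | base => simp
  | succ b hab ih => rw [sum_Ioc_succ_top hab, ih, Nat.add_sub_cancel, sub_add_sub_cancel']

theorem sq_sub_le_mul_sum_sq_sub_pred (x : ℕ → R) {a b : ℕ} (hab : a ≤ b) :
    (x b - x a) ^ 2 ≤ ((b - a : ℕ) : R) * ∑ j ∈ Ioc a b, (x j - x (j - 1)) ^ 2 := by
  rw [← sum_Ioc_sub_pred x hab, ← Nat.card_Ioc]
  exact sq_sum_le_card_mul_sum_sq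

theorem four_mul_sq_le_mul_sum_sq_sub_pred {x : ℕ → R} {n k : ℕ} (h0 : x 0 = 0) (hn : x n = 0)
    (hk : k ≤ n) : 4 * x k ^ 2 ≤ n * ∑ j ∈ Icc 1 n, (x j - x (j - 1)) ^ 2 := by
  rcases k.eq_zero_or_pos with rfl | hk0
  · rw [h0]
    simpa using mul_nonneg n.cast_nonneg (sum_nonneg fun j _ => sq_nonneg (x j - x (j - 1)))
  have hleft := sq_sub_le_mul_sum_sq_sub_pred x (Nat.zero_le k)
  have hright := sq_sub_le_mul_sum_sq_sub_pred x hk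
  rw [h0, sub_zero, Nat.sub_zero] at hleft
  rw [hn, zero_sub, neg_sq, Nat.cast_sub hk] at hright
  rw [show Finset.Icc 1 n = Finset.Ioc 0 n from Finset.Icc_add_one_left_eq_Ioc 0 n,
    ← sum_Ioc_consecutive _ (Nat.zero_le k) hk]
  set A := ∑ j ∈ Finset.Ioc 0 k, (x j - x (j - 1)) ^ 2
  set B := ∑ j ∈ Finset.Ioc k n, (x j - x (j - 1)) ^ 2
  have hkn : (0 : R) ≤ n - k := sub_nonneg.2 (by exact_mod_cast hk)
  have hnpos : (0 : R) < n := by exact_mod_cast hk0.trans_le hk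
  have hamgm : 4 * (k * (n - k)) ≤ (n : R) ^ 2 := by nlinarith [sq_nonneg (2 * (k : R) - n)]
  refine le_of_mul_le_mul_left ?_ hnpos
  calc (n : R) * (4 * x k ^ 2) = 4 * ((n - k) * x k ^ 2 + k * x k ^ 2) := by ring
    _ ≤ 4 * ((n - k) * (k * A) + k * ((n - k) * B)) := by gcongr
    _ = 4 * (k * (n - k)) * (A + B) := by ring
    _ ≤ n ^ 2 * (A + B) := by gcongr
    _ = n * (n * (A + B)) := by ring

end

theorem abs_le_sqrt_div_two_mul_sqrt_sum_sq_sub_pred {x : ℕ → ℝ} {n k : ℕ} (h0 : x 0 = 0)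
    (hn : x n = 0) (hk : k ≤ n) :
    |x k| ≤ √n / 2 * √(∑ j ∈ Finset.Icc 1 n, (x j - x (j - 1)) ^ 2) := by
  refine abs_le_of_sq_le_sq ?_ (by positivity)
  rw [mul_pow, div_pow, Real.sq_sqrt n.cast_nonneg,
    Real.sq_sqrt (sum_nonneg fun j _ => sq_nonneg _)]
  linarith [four_mul_sq_le_mul_sum_sq_sub_pred h0 hn hk]

theorem Monotone.mul_sub_le_integral {g : ℝ → ℝ} (hg : Monotone g) (a b : ℝ) :
    g a * (b - a) ≤ ∫ s in a..b, g s := by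
  rcases le_total a b with hab | hba
  · have h := integral_mono_on (μ := MeasureTheory.volume) hab intervalIntegrable_const
      hg.intervalIntegrable fun s hs => hg hs.1
    rwa [integral_const, smul_eq_mul, mul_comm] at h
  · have h := integral_mono_on (μ := MeasureTheory.volume) hba hg.intervalIntegrable
      intervalIntegrable_const fun s hs => hg hs.2
    rw [integral_const, smul_eq_mul] at h
    rw [integral_symm]
    linarith

theorem Monotone.neg_mul_abs_le_integral {g : ℝ → ℝ} (hg : Monotone g) {c : ℝ} (hc : |g 0| ≤ c)
    (y : ℝ) : -(c * |y|) ≤ ∫ s in 0..y, g s := by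
  calc -(c * |y|) ≤ -(|g 0| * |y|) := by gcongr
    _ = -|g 0 * y| := by rw [abs_mul]
    _ ≤ g 0 * (y - 0) := by rw [sub_zero]; exact neg_abs_le _
    _ ≤ ∫ s in 0..y, g s := hg.mul_sub_le_integral 0 y

theorem Real.sqrt_mul_sqrt_sub_one_le {x : ℝ} (hx : 0 ≤ x) : √x * √(x - 1) ≤ x :=
  calc √x * √(x - 1) ≤ √x * √x := by gcongr; linarith
    _ = x := Real.mul_self_sqrt hx

theorem Real.sub_one_mul_sqrt_le {x : ℝ} (hx : 1 ≤ x) : (x - 1) * √x ≤ x * √(x - 1) :=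
  calc (x - 1) * √x = √(x - 1) * (√x * √(x - 1)) := by
        nth_rewrite 1 [← Real.mul_self_sqrt (sub_nonneg.2 hx)]
        ring
    _ ≤ √(x - 1) * x := by gcongr; exact Real.sqrt_mul_sqrt_sub_one_le (by linarith)
    _ = x * √(x - 1) := mul_comm _ _

theorem le_of_sq_le_mul {s a : ℝ} (hs : 0 ≤ s) (ha : 0 ≤ a) (h : s ^ 2 ≤ a * s) : s ≤ a := by
  rcases hs.eq_or_lt with rfl | hpos
  · exact ha
  · exact le_of_mul_le_mul_right (by rwa [← sq]) hpos

noncomputable def discreteAction (n : ℕ) (f : ℝ → ℝ → ℝ) (x : ℕ → ℝ) : ℝ :=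
  (∑ k ∈ Finset.Icc 1 n, (1 / 2) * (x k - x (k - 1)) ^ 2)
    + (1 / (n : ℝ) ^ 2) * ∑ k ∈ Finset.Icc 1 (n - 1), ∫ s in (0 : ℝ)..(x k), f ((k : ℝ) / n) s

theorem sub_le_discreteAction {n : ℕ} (hn : 1 ≤ n) {c : ℝ} (hc : 0 ≤ c) {f : ℝ → ℝ → ℝ}
    (hmono : ∀ t ∈ Set.Icc (0 : ℝ) 1, Monotone (f t)) (hbound : ∀ t ∈ Set.Icc (0 : ℝ) 1, |f t 0| ≤ c)
    {x : ℕ → ℝ} (h0 : x 0 = 0) (hn0 : x n = 0) :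
    (∑ k ∈ Finset.Icc 1 n, (x k - x (k - 1)) ^ 2) / 2
      - c * (√((n : ℝ) - 1) / n) * √(∑ k ∈ Finset.Icc 1 n, (x k - x (k - 1)) ^ 2)
      ≤ discreteAction n f x := by
  set S := ∑ k ∈ Finset.Icc 1 n, (x k - x (k - 1)) ^ 2 with hS_def
  set M := √n / 2 * √S
  have hnpos : (0 : ℝ) < n := by positivity
  have hpotential : ∀ k ∈ Finset.Icc 1 (n - 1), -(c * M) ≤ ∫ s in (0 : ℝ)..(x k), f ((k : ℝ) / n) s :=
    fun k hk => by
      have hkn : k ≤ n := by grind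
      have ht : (k : ℝ) / n ∈ Set.Icc (0 : ℝ) 1 :=
        ⟨by positivity, div_le_one_of_le₀ (by exact_mod_cast hkn) hnpos.le⟩
      refine le_trans ?_ ((hmono _ ht).neg_mul_abs_le_integral (hbound _ ht) (x k))
      gcongr
      exact abs_le_sqrt_div_two_mul_sqrt_sum_sq_sub_pred h0 hn0 hkn
  have hsum := sum_le_sum hpotential
  rw [sum_const, Nat.card_Icc, Nat.add_sub_cancel, nsmul_eq_mul, Nat.cast_pred hn] at hsum
  have hconst : (n - 1) / (n : ℝ) ^ 2 * M ≤ √((n : ℝ) - 1) / n * √S := by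
    have hn1 : (1 : ℝ) ≤ n := by exact_mod_cast hn
    calc (n - 1) / (n : ℝ) ^ 2 * M = (n - 1) * √n / (2 * n ^ 2) * √S := by ring
      _ ≤ n * √(n - 1) / (2 * n ^ 2) * √S := by
          gcongr ?_ / _ * _
          exact Real.sub_one_mul_sqrt_le hn1
      _ = √(n - 1) / (2 * n) * √S := by field_simp
      _ ≤ √((n : ℝ) - 1) / n * √S := by gcongr; linarith
  calc S / 2 - c * (√((n : ℝ) - 1) / n) * √S = S / 2 - c * (√((n : ℝ) - 1) / n * √S) := by ring
    _ ≤ S / 2 - c * ((n - 1) / n ^ 2 * M) := by gcongr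
    _ = S / 2 + 1 / n ^ 2 * ((n - 1) * -(c * M)) := by ring
    _ ≤ S / 2 + 1 / n ^ 2 * ∑ k ∈ Finset.Icc 1 (n - 1), ∫ s in (0 : ℝ)..(x k), f ((k : ℝ) / n) s := by
        gcongr
    _ = discreteAction n f x := by rw [discreteAction, ← mul_sum, ← hS_def]; ring

theorem stmt10_general (n : ℕ) (hn : 2 ≤ n) (c : ℝ) (hc : 0 < c)
    (f : ℝ → ℝ → ℝ)
    (hmono : ∀ t ∈ Set.Icc (0:ℝ) 1, Monotone (f t))
    (hbound : ∀ t ∈ Set.Icc (0:ℝ) 1, |f t 0| ≤ c)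
    (I : (ℕ → ℝ) → ℝ)
    (hI : ∀ x : ℕ → ℝ, I x = (∑ k ∈ Finset.Icc 1 n, (1/2) * (x k - x (k-1))^2)
        + (1/(n:ℝ)^2) * ∑ k ∈ Finset.Icc 1 (n-1),
            (∫ s in (0:ℝ)..(x k), f ((k:ℝ)/n) s))
    (xn : ℕ → ℝ) (hx0 : xn 0 = 0) (hxn : xn n = 0)
    (hle : I xn ≤ I (fun _ => 0)) :
    Real.sqrt (∑ k ∈ Finset.Icc 1 n, (xn k - xn (k-1))^2)
        ≤ 2 * c * Real.sqrt ((n:ℝ) - 1) / n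
    ∧ ∀ k ≤ n, |xn k| ≤ c := by
  set S := ∑ k ∈ Finset.Icc 1 n, (xn k - xn (k - 1)) ^ 2
  have hS : 0 ≤ S := sum_nonneg fun k _ => sq_nonneg _
  have hnpos : (0 : ℝ) < n := by positivity
  have hcoercive : S / 2 - c * (√((n : ℝ) - 1) / n) * √S ≤ 0 := by
    have hI0 : I (fun _ => 0) = 0 := by simp [hI]
    calc _ ≤ discreteAction n f xn := sub_le_discreteAction (by omega) hc.le hmono hbound hx0 hxn
      _ = I xn := (hI xn).symm
      _ ≤ 0 := hI0 ▸ hle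
  have hnorm : √S ≤ 2 * c * √((n : ℝ) - 1) / n := by
    refine le_of_sq_le_mul (Real.sqrt_nonneg S) (by positivity) ?_
    rw [Real.sq_sqrt hS]
    linarith [show 2 * c * √((n : ℝ) - 1) / n * √S = 2 * (c * (√((n : ℝ) - 1) / n) * √S) by ring]
  refine ⟨hnorm, fun k hk => ?_⟩
  calc |xn k| ≤ √n / 2 * √S := abs_le_sqrt_div_two_mul_sqrt_sum_sq_sub_pred hx0 hxn hk
    _ ≤ √n / 2 * (2 * c * √((n : ℝ) - 1) / n) := by gcongr
    _ = c * (√n * √(n - 1)) / n := by ring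
    _ ≤ c * n / n := by gcongr; exact Real.sqrt_mul_sqrt_sub_one_le hnpos.le
    _ = c := by field_simp

theorem stmt10 (n : ℕ) (hn : 2 ≤ n) (c : ℝ) (hc : 0 < c)
    (f : ℝ → ℝ → ℝ) (hf : Continuous (Function.uncurry f))
    (hmono : ∀ t ∈ Set.Icc (0:ℝ) 1, Monotone (f t))
    (hbound : ∀ t ∈ Set.Icc (0:ℝ) 1, |f t 0| ≤ c)
    (I : (ℕ → ℝ) → ℝ)
    (hI : ∀ x : ℕ → ℝ, I x = (∑ k ∈ Finset.Icc 1 n, (1/2) * (x k - x (k-1))^2)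
        + (1/(n:ℝ)^2) * ∑ k ∈ Finset.Icc 1 (n-1),
            (∫ s in (0:ℝ)..(x k), f ((k:ℝ)/n) s))
    (xn : ℕ → ℝ) (hx0 : xn 0 = 0) (hxn : xn n = 0)
    (hmin : ∀ y : ℕ → ℝ, y 0 = 0 → y n = 0 → I xn ≤ I y)
    (hle : I xn ≤ I (fun _ => 0)) :
    Real.sqrt (∑ k ∈ Finset.Icc 1 n, (xn k - xn (k-1))^2)
        ≤ 2 * c * Real.sqrt ((n:ℝ) - 1) / n
    ∧ ∀ k ≤ n, |xn k| ≤ c :=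
  stmt10_general n hn c hc f hmono hbound I hI xn hx0 hxn hle
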